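/- (Outer-product difference bound, the key display in the proof of Lemma A.1.) For every integer N ≥ 1, every d ∈ ℕ, and all u, v : Fin N → EuclideanSpace ℝ (Fin d), one has ‖(1/N) · ∑_{i : Fin N} (Matrix.vecMulVec (u i) (u i) − Matrix.vecMulVec (v i) (v i))‖_F ≤ (√((1/N) · ∑_{i : Fin N} ‖u i‖²) + √((1/N) · ∑_{i : Fin N} ‖v i‖²)) · √((1/N) · ∑_{i : Fin N} ‖u i − v i‖²). -/

import Mathlib

/-!
Write `u u - v v = u (u - v) + (u - v) v` for the outer products; since the Frobenius norm of
an outer product is the product of the Euclidean norms, each summand has norm at most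
`(‖uᵢ‖ + ‖vᵢ‖) ‖uᵢ - vᵢ‖`. Averaging and applying Cauchy–Schwarz to each of the two resulting
averages gives the bound.
-/

attribute [local instance] Matrix.frobeniusSeminormedAddCommGroup
attribute [local instance] Matrix.frobeniusNormedSpace

namespace Matrix

theorem vecMulVec_self_sub_vecMulVec_self {R m : Type*} [CommRing R] (a b : m → R) :
    vecMulVec a a - vecMulVec b b = vecMulVec a (a - b) + vecMulVec (a - b) b := by
  rw [vecMulVec_sub, sub_vecMulVec]
  abel

variable {𝕜 m : Type*} [RCLike 𝕜] [Fintype m]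

theorem frobenius_norm_vecMulVec {n : Type*} [Fintype n]
    (a : EuclideanSpace 𝕜 m) (b : EuclideanSpace 𝕜 n) :
    ‖vecMulVec a b‖ = ‖a‖ * ‖b‖ := by
  rw [frobenius_norm_def, EuclideanSpace.norm_eq, EuclideanSpace.norm_eq,
    ← Real.sqrt_mul (by positivity), Real.sqrt_eq_rpow, Finset.sum_mul_sum]
  simp [vecMulVec_apply, mul_pow]

theorem frobenius_norm_vecMulVec_self_sub_vecMulVec_self_le (a b : EuclideanSpace 𝕜 m) :
    ‖vecMulVec a a - vecMulVec b b‖ ≤ (‖a‖ + ‖b‖) * ‖a - b‖ := by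
  have hsub : (⇑(a - b) : m → 𝕜) = ⇑a - ⇑b := WithLp.ofLp_sub 2 a b
  calc ‖vecMulVec a a - vecMulVec b b‖
      = ‖vecMulVec a (a - b) + vecMulVec (a - b) b‖ := by
        rw [hsub, vecMulVec_self_sub_vecMulVec_self]
    _ ≤ ‖a‖ * ‖a - b‖ + ‖a - b‖ * ‖b‖ := by
        grw [norm_add_le, frobenius_norm_vecMulVec, frobenius_norm_vecMulVec]
    _ = (‖a‖ + ‖b‖) * ‖a - b‖ := by ring

end Matrix

theorem Real.mul_sum_mul_le_sqrt_mul_sqrt {ι : Type*} (s : Finset ι) {c : ℝ} (hc : 0 ≤ c)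
    (f g : ι → ℝ) :
    c * ∑ i ∈ s, f i * g i ≤ √(c * ∑ i ∈ s, f i ^ 2) * √(c * ∑ i ∈ s, g i ^ 2) := by
  rw [sqrt_mul hc, sqrt_mul hc, mul_mul_mul_comm, mul_self_sqrt hc]
  exact mul_le_mul_of_nonneg_left (sum_mul_le_sqrt_mul_sqrt s f g) hc

theorem frobenius_norm_avg_vecMulVec_sub_le_general
    (N : ℕ) (d : ℕ) (u v : Fin N → EuclideanSpace ℝ (Fin d)) :
    ‖(1 / (N : ℝ)) •
        (∑ i : Fin N, (Matrix.vecMulVec (u i) (u i) - Matrix.vecMulVec (v i) (v i)))‖ ≤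
      (Real.sqrt ((1 / (N : ℝ)) * ∑ i : Fin N, ‖u i‖ ^ 2) +
          Real.sqrt ((1 / (N : ℝ)) * ∑ i : Fin N, ‖v i‖ ^ 2)) *
        Real.sqrt ((1 / (N : ℝ)) * ∑ i : Fin N, ‖u i - v i‖ ^ 2) := by
  have hc : (0 : ℝ) ≤ 1 / (N : ℝ) := by positivity
  calc ‖(1 / (N : ℝ)) •
        ∑ i, (Matrix.vecMulVec (u i) (u i) - Matrix.vecMulVec (v i) (v i))‖
      ≤ (1 / (N : ℝ)) * ∑ i, (‖u i‖ + ‖v i‖) * ‖u i - v i‖ := by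
        rw [norm_smul_of_nonneg hc]
        gcongr
        exact (norm_sum_le _ _).trans (Finset.sum_le_sum fun i _ =>
          Matrix.frobenius_norm_vecMulVec_self_sub_vecMulVec_self_le (u i) (v i))
    _ = (1 / (N : ℝ)) * ∑ i, ‖u i‖ * ‖u i - v i‖ +
          (1 / (N : ℝ)) * ∑ i, ‖v i‖ * ‖u i - v i‖ := by
        simp only [add_mul, Finset.sum_add_distrib, mul_add]
    _ ≤ _ := by
        grw [Real.mul_sum_mul_le_sqrt_mul_sqrt _ hc, Real.mul_sum_mul_le_sqrt_mul_sqrt _ hc,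
          add_mul]

/-- Outer-product difference bound: key display in the proof of Lemma A.1. -/
theorem frobenius_norm_avg_vecMulVec_sub_le
    (N : ℕ) (hN : 1 ≤ N) (d : ℕ) (u v : Fin N → EuclideanSpace ℝ (Fin d)) :
    ‖(1 / (N : ℝ)) •
        (∑ i : Fin N, (Matrix.vecMulVec (u i) (u i) - Matrix.vecMulVec (v i) (v i)))‖ ≤
      (Real.sqrt ((1 / (N : ℝ)) * ∑ i : Fin N, ‖u i‖ ^ 2) +
          Real.sqrt ((1 / (N : ℝ)) * ∑ i : Fin N, ‖v i‖ ^ 2)) *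
        Real.sqrt ((1 / (N : ℝ)) * ∑ i : Fin N, ‖u i - v i‖ ^ 2) :=
  frobenius_norm_avg_vecMulVec_sub_le_general N d u v
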